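/- arXiv:2202.10296 — 5 statements merged into one kernel-verified Lean document; each statement's English description precedes it below -/
import Mathlib

section
/- Let Y have density y^{-2}·1_{[1,∞)}(y) and let N(Y) be mixed Poisson with mixing variable Y. Then for n ≥ 2, n(n−1)·P(N(Y)=n) = P(S_{n-1} > 1) where S_{n-1} ∼ Gamma(n−1, 1); consequently for any r > 1, r^n·P(N(Y)=n) → ∞ as n → ∞, so Σ_i (1−s)^i P(N(Y)=i) fails to converge absolutely for s ∉ [0,2]. -/
/-!
Cancelling `y²` against `yⁿ` turns the mixing integral for `P(N(Y) = n)` into `1 / (n (n - 1))`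
times the tail `P(S_{n-1} > 1)` of a Gamma(n - 1, 1) variable. On `(0, 1]` the Gamma(n - 1, 1)
density is at most `1 / (n - 2)!`, so that tail is at least `1 - 1 / (n - 2)!`, hence
`P(N(Y) = n) ≥ 1 / (2 n²)` for `n ≥ 4`. This polynomial lower bound loses against any geometric
factor `rⁿ` with `r > 1`; for `|1 - s| > 1` the terms of the series do not even tend to zero.
-/

open scoped BigOperators

/-- `IsPMF p` : `p` is a probability mass function on `ℕ`. -/
def IsPMF (p : ℕ → ℝ) : Prop :=
  (∀ n, 0 ≤ p n) ∧ HasSum p 1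

/-- Binomial `α`-thinning at the level of distributions:
`thin α p k = P(α ∘ X = k)` when `X` has pmf `p`. -/
noncomputable def thin (α : ℝ) (p : ℕ → ℝ) (k : ℕ) : ℝ :=
  ∑' n : ℕ, (n.choose k : ℝ) * α ^ k * (1 - α) ^ (n - k) * p n

/-- Convolution of two pmfs on `ℕ` (law of the sum of independent variables). -/
noncomputable def conv (p q : ℕ → ℝ) (n : ℕ) : ℝ :=
  ∑ k ∈ Finset.range (n + 1), p k * q (n - k)

/-- `MemM α p` : the distribution `p` is an `α`-thinned distribution, i.e. `p ∈ M_α`. -/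
def MemM (α : ℝ) (p : ℕ → ℝ) : Prop :=
  ∃ q : ℕ → ℝ, IsPMF q ∧ ∀ k, p k = thin α q k

/-- `rho p` : the minimal thinning parameter `ρ(X)`. -/
noncomputable def rho (p : ℕ → ℝ) : ℝ :=
  sInf {α : ℝ | α ∈ Set.Icc (0:ℝ) 1 ∧ MemM α p}

open MeasureTheory Set Filter Real
open scoped Nat

/-- `P(N(Y) = n)`: the Poisson(y) mass at `n` averaged against the density `y⁻²` on `(1, ∞)`. -/
noncomputable def paretoMixedPoisson (n : ℕ) : ℝ :=
  ∫ y in Ioi (1:ℝ), exp (-y) * y ^ n / n ! / y ^ 2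

/-- `P(S > 1)` for `S ∼ Gamma(m + 1, 1)`. -/
noncomputable def gammaTail (m : ℕ) : ℝ :=
  ∫ y in Ioi (1:ℝ), exp (-y) * y ^ m / m !

lemma integrableOn_exp_neg_mul_pow (m : ℕ) :
    IntegrableOn (fun y : ℝ => exp (-y) * y ^ m) (Ioi 0) := by
  have h := GammaIntegral_convergent (s := (m + 1 : ℝ)) (by positivity)
  simp only [add_sub_cancel_right, rpow_natCast] at h
  simpa only [mul_comm] using h

lemma integral_exp_neg_mul_pow (m : ℕ) : ∫ y in Ioi (0:ℝ), exp (-y) * y ^ m = m ! := by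
  have h := Gamma_eq_integral (s := (m + 1 : ℝ)) (by positivity)
  simp only [add_sub_cancel_right, rpow_natCast, Gamma_nat_eq_factorial] at h
  simpa only [mul_comm] using h.symm

lemma factorial_sub_one_le_integral_exp_neg_mul_pow (m : ℕ) :
    (m ! : ℝ) - 1 ≤ ∫ y in Ioi (1:ℝ), exp (-y) * y ^ m := by
  have hint := integrableOn_exp_neg_mul_pow m
  have hsplit : (∫ y in Ioc (0:ℝ) 1, exp (-y) * y ^ m) + ∫ y in Ioi (1:ℝ), exp (-y) * y ^ m
      = m ! := by
    rw [← integral_exp_neg_mul_pow m, ← Ioc_union_Ioi_eq_Ioi zero_le_one,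
      setIntegral_union (Ioc_disjoint_Ioi le_rfl) measurableSet_Ioi
        (hint.mono_set Ioc_subset_Ioi_self) (hint.mono_set (Ioi_subset_Ioi zero_le_one))]
  have hle : ∫ y in Ioc (0:ℝ) 1, exp (-y) * y ^ m ≤ 1 := by
    refine (le_norm_self _).trans <|
      (norm_setIntegral_le_of_norm_le_const (C := 1) measure_Ioc_lt_top fun y hy => ?_).trans_eq
        (by simp)
    rw [norm_mul, norm_pow, norm_of_nonneg (exp_pos _).le, norm_of_nonneg hy.1.le]
    exact mul_le_one₀ (exp_le_one_iff.2 (neg_nonpos.2 hy.1.le)) (pow_nonneg hy.1.le m)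
      (pow_le_one₀ hy.1.le hy.2)
  linarith

lemma one_sub_inv_factorial_le_gammaTail (m : ℕ) : 1 - ((m ! : ℝ))⁻¹ ≤ gammaTail m := by
  have hm : (0:ℝ) < m ! := by positivity
  rw [gammaTail, integral_div, le_div_iff₀ hm, sub_mul, inv_mul_cancel₀ hm.ne', one_mul]
  exact factorial_sub_one_le_integral_exp_neg_mul_pow m

lemma paretoMixedPoisson_add_two (m : ℕ) :
    paretoMixedPoisson (m + 2) = gammaTail m / ((m + 2) * (m + 1)) := by
  rw [gammaTail, ← integral_div, paretoMixedPoisson]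
  refine setIntegral_congr_fun measurableSet_Ioi fun y hy => ?_
  have hy : y ≠ 0 := (zero_lt_one.trans hy).ne'
  simp only [Nat.factorial_succ]
  push_cast
  field_simp
  ring

lemma mul_paretoMixedPoisson_eq_gammaTail {n : ℕ} (hn : 2 ≤ n) :
    n * (n - 1) * paretoMixedPoisson n = gammaTail (n - 2) := by
  obtain ⟨m, rfl⟩ := Nat.exists_eq_add_of_le' hn
  rw [paretoMixedPoisson_add_two, Nat.add_sub_cancel]
  push_cast
  field_simp
  ring

lemma inv_two_mul_sq_le_paretoMixedPoisson {n : ℕ} (hn : 4 ≤ n) :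
    (2 * (n:ℝ) ^ 2)⁻¹ ≤ paretoMixedPoisson n := by
  obtain ⟨m, rfl⟩ := Nat.exists_eq_add_of_le' (show 2 ≤ n by omega)
  have hfac : (2:ℝ) ≤ m ! := by
    exact_mod_cast (show 2 ≤ m by omega).trans (Nat.self_le_factorial _)
  have htail : (1 / 2 : ℝ) ≤ gammaTail m := by
    refine le_trans ?_ (one_sub_inv_factorial_le_gammaTail m)
    linarith [inv_anti₀ two_pos hfac]
  rw [paretoMixedPoisson_add_two, le_div_iff₀ (by positivity)]
  push_cast
  refine le_trans ?_ htail
  rw [inv_mul_le_iff₀ (by positivity)]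
  nlinarith

lemma tendsto_const_pow_div_pow_atTop (k : ℕ) {r : ℝ} (hr : 1 < r) :
    Tendsto (fun n : ℕ => r ^ n / (n : ℝ) ^ k) atTop atTop := by
  have hpos : ∀ᶠ n : ℕ in atTop, (n : ℝ) ^ k / r ^ n ∈ Ioi 0 := by
    filter_upwards [eventually_ge_atTop 1] with n hn
    have : (0:ℝ) < n := by exact_mod_cast hn
    exact mem_Ioi.2 (by positivity)
  exact (tendsto_nhdsWithin_iff.2 ⟨tendsto_pow_const_div_const_pow_of_one_lt k hr, hpos⟩
    ).inv_tendsto_nhdsGT_zero.congr fun n => by rw [Pi.inv_apply, inv_div]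

lemma tendsto_pow_mul_paretoMixedPoisson_atTop {r : ℝ} (hr : 1 < r) :
    Tendsto (fun n => r ^ n * paretoMixedPoisson n) atTop atTop := by
  refine tendsto_atTop_mono' atTop ?_ ((tendsto_const_pow_div_pow_atTop 2 hr).const_mul_atTop
    (inv_pos.2 two_pos))
  filter_upwards [eventually_ge_atTop 4] with n hn
  calc 2⁻¹ * (r ^ n / (n:ℝ) ^ 2) = r ^ n * (2 * (n:ℝ) ^ 2)⁻¹ := by ring
    _ ≤ r ^ n * paretoMixedPoisson n := by
        gcongr
        exact inv_two_mul_sq_le_paretoMixedPoisson hn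

lemma one_lt_abs_one_sub_of_notMem_Icc {s : ℝ} (hs : s ∉ Icc (0:ℝ) 2) : 1 < |1 - s| := by
  rw [mem_Icc, not_and_or, not_le, not_le] at hs
  rcases hs with hs | hs
  · exact lt_abs.2 (Or.inl (by linarith))
  · exact lt_abs.2 (Or.inr (by linarith))

/-- for `Y` with density `y⁻² 1_{[1,∞)}(y)` and `N(Y)` mixed Poisson,
`n(n−1) P(N(Y)=n) = P(S_{n−1} > 1)` (a Gamma(n−1,1) tail) for `n ≥ 2`, hence
`r^n P(N(Y)=n) → ∞` for every `r > 1`, and `Σ_i (1−s)^i P(N(Y)=i)` does not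
converge absolutely for `s ∉ [0,2]`. -/
theorem stmt_4 :
    (∀ n : ℕ, 2 ≤ n →
        (n : ℝ) * ((n : ℝ) - 1) *
            (∫ y in Set.Ioi (1:ℝ), Real.exp (-y) * y ^ n / (n.factorial : ℝ) / y ^ 2) =
          ∫ y in Set.Ioi (1:ℝ), Real.exp (-y) * y ^ (n - 2) / ((n - 2).factorial : ℝ)) ∧
    (∀ r : ℝ, 1 < r →
        Filter.Tendsto
          (fun n : ℕ =>
            r ^ n * ∫ y in Set.Ioi (1:ℝ), Real.exp (-y) * y ^ n / (n.factorial : ℝ) / y ^ 2)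
          Filter.atTop Filter.atTop) ∧
    (∀ s : ℝ, s ∉ Set.Icc (0:ℝ) 2 →
        ¬ Summable fun i : ℕ =>
            |1 - s| ^ i *
              ∫ y in Set.Ioi (1:ℝ), Real.exp (-y) * y ^ i / (i.factorial : ℝ) / y ^ 2) := by
  refine ⟨fun n hn => mul_paretoMixedPoisson_eq_gammaTail hn,
    fun r hr => tendsto_pow_mul_paretoMixedPoisson_atTop hr, fun s hs hsum => ?_⟩
  exact not_tendsto_nhds_of_tendsto_atTop
    (tendsto_pow_mul_paretoMixedPoisson_atTop (one_lt_abs_one_sub_of_notMem_Icc hs)) 0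
    hsum.tendsto_atTop_zero
end

section
/- For every α ∈ (0,1], M_{α+} = M_α; that is, if a nonnegative integer-valued X satisfies X ∈ M_γ for every γ ∈ (α,1], then X ∈ M_α. Moreover, M_α ⊂ M_β for 0 < α < β ≤ 1. -/
/-!
Thinning composes, `thin β ∘ thin (α / β) = thin α`, so `M_α ⊆ M_β`, and the Bernoulli law
`B(β) ∈ M_β` is not in `M_α`. For closedness, let `p = thin γ Q_γ` for all `γ ∈ (α, 1]`. On any
fixed finite set the weights of `Bin(n, γ)` tend to `0` as `n → ∞`, uniformly in `γ ≥ α > 0`; hence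
the laws `Q_γ` are uniformly tight. Along `γ_j ↓ α` a subsequence of `Q_{γ_j}` converges pointwise,
tightness makes the limit `q` a probability law and lets one pass to the limit in
`p = thin γ_j Q_{γ_j}`, which gives `p = thin α q`.
-/
open scoped BigOperators

open Filter Topology Finset

noncomputable def binomWeight (γ : ℝ) (n k : ℕ) : ℝ :=
  (n.choose k : ℝ) * γ ^ k * (1 - γ) ^ (n - k)

namespace binomWeight

variable {γ : ℝ}

lemma nonneg (h0 : 0 ≤ γ) (h1 : γ ≤ 1) (n k : ℕ) : 0 ≤ binomWeight γ n k := by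
  unfold binomWeight
  have : 0 ≤ 1 - γ := by linarith
  positivity

lemma pos (h0 : 0 < γ) (h1 : γ < 1) {n k : ℕ} (hkn : k ≤ n) : 0 < binomWeight γ n k := by
  unfold binomWeight
  have : 0 < 1 - γ := by linarith
  have : 0 < (n.choose k : ℝ) := by exact_mod_cast Nat.choose_pos hkn
  positivity

lemma eq_zero_of_lt {n k : ℕ} (h : n < k) : binomWeight γ n k = 0 := by
  simp [binomWeight, Nat.choose_eq_zero_of_lt h]

lemma hasSum (γ : ℝ) (n : ℕ) : HasSum (binomWeight γ n) 1 := by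
  have hsum : ∑ k ∈ range (n + 1), binomWeight γ n k = 1 := by
    have := add_pow γ (1 - γ) n
    rw [add_sub_cancel, one_pow] at this
    rw [this]
    exact sum_congr rfl fun k _ => by simp only [binomWeight]; ring
  exact hsum ▸ hasSum_sum_of_ne_finset_zero fun k hk =>
    eq_zero_of_lt (by simpa [Nat.lt_succ_iff] using hk)

lemma le_one (h0 : 0 ≤ γ) (h1 : γ ≤ 1) (n k : ℕ) : binomWeight γ n k ≤ 1 :=
  le_hasSum (hasSum γ n) k fun j _ => nonneg h0 h1 n j

lemma le_pow_mul_pow {α : ℝ} (hα : 0 ≤ α) (hαγ : α ≤ γ) (h1 : γ ≤ 1) (n k : ℕ) :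
    binomWeight γ n k ≤ (n : ℝ) ^ k * (1 - α) ^ (n - k) := by
  unfold binomWeight
  have hchoose : (n.choose k : ℝ) ≤ (n : ℝ) ^ k := by exact_mod_cast Nat.choose_le_pow n k
  have hγk : γ ^ k ≤ 1 := pow_le_one₀ (hα.trans hαγ) h1
  have hpow : (1 - γ) ^ (n - k) ≤ (1 - α) ^ (n - k) :=
    pow_le_pow_left₀ (by linarith) (by linarith) _
  calc (n.choose k : ℝ) * γ ^ k * (1 - γ) ^ (n - k) ≤ (n : ℝ) ^ k * 1 * (1 - α) ^ (n - k) := by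
        gcongr
        · exact pow_nonneg (hα.trans hαγ) k
    _ = (n : ℝ) ^ k * (1 - α) ^ (n - k) := by rw [mul_one]


/-- Thinning twice is thinning once: `Bin(Bin(n, δ), β) = Bin(n, β δ)`. -/
lemma sum_mul (β δ : ℝ) (n k : ℕ) :
    ∑ m ∈ range (n + 1), binomWeight β m k * binomWeight δ n m = binomWeight (β * δ) n k := by
  rcases lt_or_ge n k with hnk | hkn
  · rw [eq_zero_of_lt hnk]
    exact sum_eq_zero fun m hm => by
      rw [eq_zero_of_lt (show m < k by simp at hm; omega), zero_mul]
  obtain ⟨l, rfl⟩ := Nat.exists_eq_add_of_le hkn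
  have hchoose (j : ℕ) : ((k + l).choose (k + j) : ℝ) * ((k + j).choose k : ℝ)
      = ((k + l).choose k : ℝ) * (l.choose j : ℝ) := by
    have := Nat.choose_mul (n := k + l) (Nat.le_add_right k j)
    rw [Nat.add_sub_cancel_left, Nat.add_sub_cancel_left] at this
    exact_mod_cast this
  rw [show k + l + 1 = k + (l + 1) by ring, sum_range_add,
    sum_eq_zero fun m hm => by rw [eq_zero_of_lt (mem_range.mp hm), zero_mul], zero_add]
  calc ∑ j ∈ range (l + 1), binomWeight β (k + j) k * binomWeight δ (k + l) (k + j)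
      = ∑ j ∈ range (l + 1), ((k + l).choose k : ℝ) * (β * δ) ^ k *
          (((1 - β) * δ) ^ j * (1 - δ) ^ (l - j) * (l.choose j : ℝ)) := by
        refine sum_congr rfl fun j hj => ?_
        have hjl : k + l - (k + j) = l - j := by omega
        simp only [binomWeight, Nat.add_sub_cancel_left, hjl, mul_pow]
        linear_combination (β ^ k * δ ^ k * (1 - β) ^ j * δ ^ j * (1 - δ) ^ (l - j)) * hchoose j
    _ = binomWeight (β * δ) (k + l) k := by
        rw [← mul_sum, ← add_pow, binomWeight, Nat.add_sub_cancel_left]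
        ring


lemma continuous (n k : ℕ) : Continuous fun γ => binomWeight γ n k := by
  unfold binomWeight
  fun_prop

end binomWeight

lemma hasSum_tsum_swap_of_nonneg {f : ℕ → ℕ → ℝ} (hf : ∀ n k, 0 ≤ f n k)
    (hrow : ∀ n, Summable (f n)) (hsum : Summable fun n => ∑' k, f n k) :
    HasSum (fun k => ∑' n, f n k) (∑' n, ∑' k, f n k) := by
  have hF : Summable (Function.uncurry f) :=
    (summable_prod_of_nonneg fun x => hf x.1 x.2).mpr ⟨hrow, hsum⟩
  have hcol : Summable fun k => ∑' n, f n k :=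
    ((summable_prod_of_nonneg fun x => hf x.2 x.1).mp hF.prod_symm).2
  exact hF.tsum_comm ▸ hcol.hasSum

section Thinning

variable {γ : ℝ} {q : ℕ → ℝ}

lemma thin_eq_tsum (γ : ℝ) (q : ℕ → ℝ) (k : ℕ) : thin γ q k = ∑' n, binomWeight γ n k * q n := rfl

lemma summable_binomWeight_mul (h0 : 0 ≤ γ) (h1 : γ ≤ 1) (hq : IsPMF q) (k : ℕ) :
    Summable fun n => binomWeight γ n k * q n :=
  hq.2.summable.of_nonneg_of_le (fun n => mul_nonneg (binomWeight.nonneg h0 h1 n k) (hq.1 n))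
    fun n => mul_le_of_le_one_left (hq.1 n) (binomWeight.le_one h0 h1 n k)

lemma isPMF_thin (h0 : 0 ≤ γ) (h1 : γ ≤ 1) (hq : IsPMF q) : IsPMF (thin γ q) := by
  refine ⟨fun k => tsum_nonneg fun n => mul_nonneg (binomWeight.nonneg h0 h1 n k) (hq.1 n), ?_⟩
  show HasSum (fun k => ∑' n, binomWeight γ n k * q n) 1
  have hrow (n : ℕ) : HasSum (fun k => binomWeight γ n k * q n) (q n) := by
    simpa using (binomWeight.hasSum γ n).mul_right (q n)
  have := hasSum_tsum_swap_of_nonneg (fun n k => mul_nonneg (binomWeight.nonneg h0 h1 n k) (hq.1 n))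
    (fun n => (hrow n).summable) (by simpa only [(hrow _).tsum_eq] using hq.2.summable)
  simpa only [(hrow _).tsum_eq, hq.2.tsum_eq] using this

lemma thin_one (q : ℕ → ℝ) : thin 1 q = q := by
  funext k
  rw [thin_eq_tsum, tsum_eq_single k fun n hn => ?_]
  · simp [binomWeight]
  rcases hn.lt_or_gt with h | h
  · rw [binomWeight.eq_zero_of_lt h, zero_mul]
  · simp [binomWeight, zero_pow (Nat.sub_ne_zero_of_lt h)]

lemma thin_thin {β δ : ℝ} (hβ0 : 0 ≤ β) (hβ1 : β ≤ 1) (hδ0 : 0 ≤ δ) (hδ1 : δ ≤ 1)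
    (hq : IsPMF q) : thin β (thin δ q) = thin (β * δ) q := by
  funext k
  have hrow (n : ℕ) : HasSum (fun m => binomWeight β m k * (binomWeight δ n m * q n))
      (binomWeight (β * δ) n k * q n) := by
    rw [← binomWeight.sum_mul, sum_mul]
    simp_rw [mul_assoc]
    exact hasSum_sum_of_ne_finset_zero fun m hm => by
      rw [binomWeight.eq_zero_of_lt (γ := δ) (n := n) (by simpa [Nat.lt_succ_iff] using hm),
        zero_mul, mul_zero]
  have hβδ : β * δ ≤ 1 := mul_le_one₀ hβ1 hδ0 hδ1
  have hswap := hasSum_tsum_swap_of_nonneg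
    (fun n m => mul_nonneg (binomWeight.nonneg hβ0 hβ1 m k)
      (mul_nonneg (binomWeight.nonneg hδ0 hδ1 n m) (hq.1 n)))
    (fun n => (hrow n).summable)
    (by simpa only [(hrow _).tsum_eq] using
      summable_binomWeight_mul (mul_nonneg hβ0 hδ0) hβδ hq k)
  simp only [(hrow _).tsum_eq, tsum_mul_left] at hswap
  exact hswap.tsum_eq

lemma MemM.mono {α β : ℝ} (hα : 0 ≤ α) (hαβ : α ≤ β) (hβ : β ≤ 1) {p : ℕ → ℝ}
    (h : MemM α p) : MemM β p := by
  obtain ⟨q, hq, hpq⟩ := h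
  have hβ0 : 0 ≤ β := hα.trans hαβ
  have hβα : β * (α / β) = α := by
    rcases hβ0.eq_or_lt with hβ0 | hβ0
    · rw [← hβ0, zero_mul]; linarith
    · field_simp
  refine ⟨thin (α / β) q, isPMF_thin (div_nonneg hα hβ0) (div_le_one_of_le₀ hαβ hβ0) hq,
    fun k => ?_⟩
  rw [thin_thin hβ0 hβ (div_nonneg hα hβ0) (div_le_one_of_le₀ hαβ hβ0) hq, hβα, hpq]

lemma thin_single_one (γ : ℝ) : thin γ (Pi.single 1 1) = binomWeight γ 1 := by
  funext k
  rw [thin_eq_tsum, tsum_eq_single 1 fun n hn => by simp [hn]]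
  simp

/-- `thin β (Pi.single 1 1)` is the Bernoulli law `B(β)`. An `α`-thinning preimage of it charges
no `n ≥ 2`, as `B(β)` has no mass at `2`, so the mass of `B(β)` at `1` is at most `α`. -/
lemma not_memM_thin_single_one {α β : ℝ} (hα : 0 < α) (hαβ : α < β) (hβ : β ≤ 1) :
    ¬ MemM α (thin β (Pi.single 1 1)) := by
  rintro ⟨q, hq, hpq⟩
  simp only [thin_single_one] at hpq
  have hα1 : α < 1 := hαβ.trans_le hβ
  have hq_eq_zero {n : ℕ} (hn : 2 ≤ n) : q n = 0 := by
    have hsum := (summable_binomWeight_mul hα.le hα1.le hq 2).hasSum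
    rw [← thin_eq_tsum, ← hpq 2, binomWeight.eq_zero_of_lt one_lt_two,
      hasSum_zero_iff_of_nonneg fun n => mul_nonneg (binomWeight.nonneg hα.le hα1.le n 2)
        (hq.1 n)] at hsum
    exact (mul_eq_zero.mp (congrFun hsum n)).resolve_left (binomWeight.pos hα hα1 hn).ne'
  have hβ_eq : β = α * q 1 := by
    have h1 := hpq 1
    rw [thin_eq_tsum, tsum_eq_single 1 fun n hn => ?_] at h1
    · simpa [binomWeight] using h1
    rcases Nat.lt_or_ge n 2 with h | h
    · interval_cases n
      · rw [binomWeight.eq_zero_of_lt zero_lt_one, zero_mul]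
      · exact absurd rfl hn
    · rw [hq_eq_zero h, mul_zero]
  have hq1 : q 1 ≤ 1 := le_hasSum hq.2 1 fun n _ => hq.1 n
  nlinarith

end Thinning

lemma tendsto_sum_pow_mul_pow_sub {r : ℝ} (hr0 : 0 < r) (hr1 : r < 1) (m : ℕ) :
    Tendsto (fun n : ℕ => ∑ k ∈ range m, (n : ℝ) ^ k * r ^ (n - k)) atTop (𝓝 0) := by
  rw [← sum_const_zero (s := range m)]
  refine tendsto_finsetSum _ fun k _ => ?_
  have hlim := (tendsto_pow_const_mul_const_pow_of_lt_one k hr0.le hr1).div_const (r ^ k)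
  rw [zero_div] at hlim
  refine hlim.congr' ?_
  filter_upwards [eventually_ge_atTop k] with n hn
  rw [pow_sub₀ r hr0.ne' hn, mul_div_assoc, div_eq_mul_inv]

lemma IsPMF.tsum_mul_le {Q w : ℕ → ℝ} {c : ℝ} (hQ : IsPMF Q) (hw0 : ∀ n, 0 ≤ w n)
    (hw1 : ∀ n, w n ≤ 1) {N : ℕ} (hwN : ∀ n, N ≤ n → w n ≤ c) :
    ∑' n, w n * Q n ≤ ∑ n ∈ range N, w n * Q n + c * (1 - ∑ n ∈ range N, Q n) := by
  have hwQ : Summable fun n => w n * Q n :=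
    hQ.2.summable.of_nonneg_of_le (fun n => mul_nonneg (hw0 n) (hQ.1 n))
      fun n => mul_le_of_le_one_left (hQ.1 n) (hw1 n)
  have hQtail := hQ.2.summable.sum_add_tsum_nat_add N
  rw [hQ.2.tsum_eq] at hQtail
  rw [← hwQ.sum_add_tsum_nat_add N, ← hQtail, add_sub_cancel_left, ← tsum_mul_left]
  gcongr
  · exact (summable_nat_add_iff N).mpr hwQ
  · exact ((summable_nat_add_iff N).mpr hQ.2.summable).mul_left c
  · exact hQ.1 _
  · exact hwN _ (Nat.le_add_left N _)

def UniformlyTight {ι : Type*} (Q : ι → ℕ → ℝ) : Prop :=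
  ∀ ε > 0, ∀ᶠ N in atTop, ∀ i, 1 - ε ≤ ∑ n ∈ range N, Q i n

/-- Mass of `Q i` far out is thinned away from the first `m` atoms, which carry most of `p`. -/
lemma uniformlyTight_of_eq_thin {p : ℕ → ℝ} (hp : IsPMF p) {α : ℝ} (hα0 : 0 < α) (hα1 : α < 1)
    {ι : Type*} {γ : ι → ℝ} {Q : ι → ℕ → ℝ} (hαγ : ∀ i, α ≤ γ i) (hγ1 : ∀ i, γ i ≤ 1)
    (hQ : ∀ i, IsPMF (Q i)) (hpQ : ∀ i k, p k = thin (γ i) (Q i) k) : UniformlyTight Q := by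
  intro ε hε
  obtain ⟨m, hm⟩ : ∃ m, 1 - ε / 2 ≤ ∑ k ∈ range m, p k :=
    (hp.2.tendsto_sum_nat.eventually (eventually_ge_nhds (by linarith))).exists
  have hsmall := (tendsto_sum_pow_mul_pow_sub (sub_pos.mpr hα1) (by linarith) m).eventually
    (eventually_le_nhds (by norm_num : (0 : ℝ) < 1 / 2))
  obtain ⟨N₀, hN₀⟩ := eventually_atTop.mp hsmall
  filter_upwards [eventually_ge_atTop N₀] with N hN i
  have hγ0 : 0 ≤ γ i := hα0.le.trans (hαγ i)
  set B : ℕ → ℝ := fun n => ∑ k ∈ range m, binomWeight (γ i) n k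
  have hB1 (n : ℕ) : B n ≤ 1 :=
    sum_le_hasSum _ (fun k _ => binomWeight.nonneg hγ0 (hγ1 i) n k) (binomWeight.hasSum _ n)
  have hB : HasSum (fun n => B n * Q i n) (∑ k ∈ range m, p k) := by
    simp only [B, sum_mul, hpQ i, thin_eq_tsum]
    exact hasSum_sum fun k _ => (summable_binomWeight_mul hγ0 (hγ1 i) (hQ i) k).hasSum
  have htail := (hQ i).tsum_mul_le (c := 1 / 2)
    (fun n => sum_nonneg fun k _ => binomWeight.nonneg hγ0 (hγ1 i) n k) hB1
    fun n hn => (sum_le_sum fun k _ => binomWeight.le_pow_mul_pow hα0.le (hαγ i) (hγ1 i) n k).trans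
      (hN₀ n (hN.trans hn))
  have hhead : ∑ n ∈ range N, B n * Q i n ≤ ∑ n ∈ range N, Q i n :=
    sum_le_sum fun n _ => mul_le_of_le_one_left ((hQ i).1 n) (hB1 n)
  rw [hB.tsum_eq] at htail
  linarith

lemma UniformlyTight.tendstoUniformly_sum_range {ι : Type*} {Q w : ι → ℕ → ℝ}
    (htight : UniformlyTight Q) (hQ : ∀ i, IsPMF (Q i)) (hw0 : ∀ i n, 0 ≤ w i n)
    (hw1 : ∀ i n, w i n ≤ 1) :
    TendstoUniformly (fun N i => ∑ n ∈ range N, w i n * Q i n)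
      (fun i => ∑' n, w i n * Q i n) atTop := by
  rw [Metric.tendstoUniformly_iff]
  intro ε hε
  filter_upwards [htight (ε / 2) (half_pos hε)] with N hN i
  have hupper := (hQ i).tsum_mul_le (hw0 i) (hw1 i) (c := 1) (N := N) fun n _ => hw1 i n
  have hlower : ∑ n ∈ range N, w i n * Q i n ≤ ∑' n, w i n * Q i n :=
    Summable.sum_le_tsum _ (fun n _ => mul_nonneg (hw0 i n) ((hQ i).1 n))
      ((hQ i).2.summable.of_nonneg_of_le (fun n => mul_nonneg (hw0 i n) ((hQ i).1 n))
        fun n => mul_le_of_le_one_left ((hQ i).1 n) (hw1 i n))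
  rw [Real.dist_eq, abs_lt]
  constructor <;> linarith [hN i]

lemma tendsto_tsum_of_tendstoUniformly_sum_range {G : ℕ → ℕ → ℝ} {g : ℕ → ℝ} (hg : Summable g)
    (hG : ∀ n, Tendsto (G · n) atTop (𝓝 (g n)))
    (hunif : TendstoUniformly (fun N j => ∑ n ∈ range N, G j n) (fun j => ∑' n, G j n) atTop) :
    Tendsto (fun j => ∑' n, G j n) atTop (𝓝 (∑' n, g n)) :=
  hunif.tendsto_of_eventually_tendsto
    (Eventually.of_forall fun _ => tendsto_finsetSum _ fun n _ => hG n) hg.hasSum.tendsto_sum_nat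

lemma exists_tendsto_subseq_of_isPMF {Q : ℕ → ℕ → ℝ} (hQ : ∀ j, IsPMF (Q j)) :
    ∃ q : ℕ → ℝ, ∃ φ : ℕ → ℕ, StrictMono φ ∧ ∀ n, Tendsto (fun j => Q (φ j) n) atTop (𝓝 (q n)) := by
  obtain ⟨q, -, φ, hφ, hlim⟩ :=
    (isCompact_pi_infinite fun _ => isCompact_Icc (a := (0 : ℝ)) (b := 1)).tendsto_subseq
      (x := Q) fun j n => ⟨(hQ j).1 n, le_hasSum (hQ j).2 n fun m _ => (hQ j).1 m⟩
  exact ⟨q, φ, hφ, tendsto_pi_nhds.mp hlim⟩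

lemma UniformlyTight.isPMF_of_tendsto {Q : ℕ → ℕ → ℝ} {q : ℕ → ℝ} (htight : UniformlyTight Q)
    (hQ : ∀ j, IsPMF (Q j)) (hlim : ∀ n, Tendsto (Q · n) atTop (𝓝 (q n))) : IsPMF q := by
  have hq0 (n : ℕ) : 0 ≤ q n := ge_of_tendsto' (hlim n) fun j => (hQ j).1 n
  have hsum : Summable q := summable_of_sum_range_le hq0 fun N =>
    le_of_tendsto' (tendsto_finsetSum _ fun n _ => hlim n) fun j =>
      sum_le_hasSum _ (fun n _ => (hQ j).1 n) (hQ j).2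
  have hunif := htight.tendstoUniformly_sum_range hQ (w := fun _ _ => 1)
    (fun _ _ => zero_le_one) fun _ _ => le_rfl
  simp only [one_mul] at hunif
  have htsum := tendsto_tsum_of_tendstoUniformly_sum_range hsum hlim hunif
  simp only [(hQ _).2.tsum_eq] at htsum
  exact ⟨hq0, tendsto_nhds_unique tendsto_const_nhds htsum ▸ hsum.hasSum⟩

lemma UniformlyTight.tendsto_tsum_mul {Q w : ℕ → ℕ → ℝ} {q v : ℕ → ℝ} (htight : UniformlyTight Q)
    (hQ : ∀ j, IsPMF (Q j)) (hlim : ∀ n, Tendsto (Q · n) atTop (𝓝 (q n))) (hq : IsPMF q)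
    (hw0 : ∀ j n, 0 ≤ w j n) (hw1 : ∀ j n, w j n ≤ 1)
    (hwlim : ∀ n, Tendsto (w · n) atTop (𝓝 (v n))) :
    Tendsto (fun j => ∑' n, w j n * Q j n) atTop (𝓝 (∑' n, v n * q n)) := by
  have hv0 (n : ℕ) : 0 ≤ v n := ge_of_tendsto' (hwlim n) fun j => hw0 j n
  have hv1 (n : ℕ) : v n ≤ 1 := le_of_tendsto' (hwlim n) fun j => hw1 j n
  have hvq : Summable fun n => v n * q n :=
    hq.2.summable.of_nonneg_of_le (fun n => mul_nonneg (hv0 n) (hq.1 n))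
      fun n => mul_le_of_le_one_left (hq.1 n) (hv1 n)
  exact tendsto_tsum_of_tendstoUniformly_sum_range hvq (fun n => (hwlim n).mul (hlim n))
    (htight.tendstoUniformly_sum_range hQ hw0 hw1)

lemma memM_of_forall_gt {p : ℕ → ℝ} (hp : IsPMF p) {α : ℝ} (hα0 : 0 < α) (hα1 : α ≤ 1)
    (h : ∀ γ ∈ Set.Ioc α 1, MemM γ p) : MemM α p := by
  rcases hα1.eq_or_lt with rfl | hα1
  · exact ⟨p, hp, fun k => by rw [thin_one]⟩
  obtain ⟨γ, -, hγ, hγlim⟩ := exists_seq_strictAnti_tendsto' hα1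
  choose Q hQ hpQ using fun j => h (γ j) (Set.Ioo_subset_Ioc_self (hγ j))
  obtain ⟨q, φ, hφ, hlim⟩ := exists_tendsto_subseq_of_isPMF hQ
  have hγ0 (j : ℕ) : 0 ≤ γ (φ j) := hα0.le.trans (hγ _).1.le
  have hγ1 (j : ℕ) : γ (φ j) ≤ 1 := (hγ _).2.le
  have htight : UniformlyTight fun j => Q (φ j) :=
    uniformlyTight_of_eq_thin hp hα0 hα1 (fun j => (hγ _).1.le) hγ1 (fun j => hQ _) fun j => hpQ _
  have hq := htight.isPMF_of_tendsto (fun j => hQ _) hlim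
  refine ⟨q, hq, fun k => tendsto_nhds_unique ?_ (htight.tendsto_tsum_mul (fun j => hQ _) hlim hq
    (fun j n => binomWeight.nonneg (hγ0 j) (hγ1 j) n k)
    (fun j n => binomWeight.le_one (hγ0 j) (hγ1 j) n k)
    fun n => ((binomWeight.continuous n k).tendsto α).comp (hγlim.comp hφ.tendsto_atTop))⟩
  simp only [← thin_eq_tsum, ← hpQ]
  exact tendsto_const_nhds

/-- `M_{α+} = M_α` for `α ∈ (0,1]`, and `M_α ⊊ M_β` for `0 < α < β ≤ 1`. -/
theorem stmt_6 :
    (∀ (p : ℕ → ℝ), IsPMF p → ∀ α ∈ Set.Ioc (0:ℝ) 1,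
        (∀ γ ∈ Set.Ioc α 1, MemM γ p) → MemM α p) ∧
    (∀ α β : ℝ, 0 < α → α < β → β ≤ 1 →
        (∀ p : ℕ → ℝ, IsPMF p → MemM α p → MemM β p) ∧
          ∃ p : ℕ → ℝ, IsPMF p ∧ MemM β p ∧ ¬ MemM α p) := by
  refine ⟨fun p hp α hα h => memM_of_forall_gt hp hα.1 hα.2 h,
    fun α β hα hαβ hβ => ⟨fun p _ => MemM.mono hα.le hαβ.le hβ, ?_⟩⟩
  have hδ : IsPMF (Pi.single 1 1 : ℕ → ℝ) :=
    ⟨fun n => by rw [Pi.single_apply]; split_ifs <;> norm_num, hasSum_pi_single 1 1⟩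
  exact ⟨_, isPMF_thin (hα.trans hαβ).le hβ hδ, ⟨_, hδ, fun k => rfl⟩,
    not_memM_thin_single_one hα hαβ hβ⟩
end

section
/- If X is a nonnegative integer-valued random variable whose support contains a hole (there exists n ≥ 1 with P(X=n) > 0 = P(X=n−1)), then X ∉ M_α for any α ∈ (0,1); i.e., ρ(X) = 1. -/
open scoped BigOperators

/-! If `α ∘ Z` takes the value `n` with positive probability, then `Z ≥ n` with positive
probability, and on that event each of `0, …, n` is hit by the binomial thinning with positive
probability; so the law of a thinned variable with `0 < α < 1` has no holes. At `α = 0` the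
thinned variable is `0`, which the atom at `n ≥ 1` excludes, so `α = 1` is the only admissible
parameter. -/

theorem choose_mul_pow_mul_pow_le_add_pow {R : Type*} [CommSemiring R] [PartialOrder R]
    [IsOrderedRing R] {a b : R} (ha : 0 ≤ a) (hb : 0 ≤ b) (m k : ℕ) :
    (m.choose k : R) * a ^ k * b ^ (m - k) ≤ (a + b) ^ m := by
  rcases le_or_gt k m with hkm | hmk
  · rw [add_pow]
    calc (m.choose k : R) * a ^ k * b ^ (m - k) = a ^ k * b ^ (m - k) * m.choose k := by ring
      _ ≤ ∑ j ∈ Finset.range (m + 1), a ^ j * b ^ (m - j) * m.choose j :=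
        Finset.single_le_sum (f := fun j => a ^ j * b ^ (m - j) * (m.choose j : R))
          (fun j _ => by positivity) (Finset.mem_range.mpr (Nat.lt_succ_of_le hkm))
  · rw [Nat.choose_eq_zero_of_lt hmk, Nat.cast_zero, zero_mul, zero_mul]
    positivity

section Thinning

variable {α : ℝ} {q : ℕ → ℝ}

theorem thin_summand_nonneg (h0 : 0 ≤ α) (h1 : α ≤ 1) (hq : IsPMF q) (k m : ℕ) :
    0 ≤ (m.choose k : ℝ) * α ^ k * (1 - α) ^ (m - k) * q m := by
  have : 0 ≤ 1 - α := sub_nonneg.mpr h1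
  have := hq.1 m
  positivity

theorem summable_thin_summand (h0 : 0 ≤ α) (h1 : α ≤ 1) (hq : IsPMF q) (k : ℕ) :
    Summable fun m => (m.choose k : ℝ) * α ^ k * (1 - α) ^ (m - k) * q m := by
  refine hq.2.summable.of_nonneg_of_le (thin_summand_nonneg h0 h1 hq k) fun m => ?_
  have hbin := choose_mul_pow_mul_pow_le_add_pow h0 (sub_nonneg.mpr h1) m k
  rw [add_sub_cancel, one_pow] at hbin
  simpa using mul_le_mul_of_nonneg_right hbin (hq.1 m)

theorem thin_pos_of_thin_succ_pos (h0 : 0 < α) (h1 : α < 1) (hq : IsPMF q) {k : ℕ}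
    (hpos : 0 < thin α q (k + 1)) : 0 < thin α q k := by
  obtain ⟨m, hm⟩ : ∃ m, 0 < (m.choose (k + 1) : ℝ) * α ^ (k + 1) *
      (1 - α) ^ (m - (k + 1)) * q m := by
    by_contra! h
    exact hpos.not_ge (tsum_nonpos h)
  have hne : (m.choose (k + 1) : ℝ) ≠ 0 ∧ q m ≠ 0 := by
    have := hm.ne'
    simp only [mul_ne_zero_iff] at this
    exact ⟨this.1.1.1, this.2⟩
  have hkm : k ≤ m := by
    have := Nat.choose_ne_zero_iff.mp (Nat.cast_ne_zero.mp hne.1)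
    omega
  have hqm : 0 < q m := (hq.1 m).lt_of_ne' hne.2
  have hchoose : (0 : ℝ) < m.choose k := Nat.cast_pos.mpr (Nat.choose_pos hkm)
  have hα' : 0 < 1 - α := sub_pos.mpr h1
  exact (summable_thin_summand h0.le h1.le hq k).tsum_pos
    (thin_summand_nonneg h0.le h1.le hq k) m (by positivity)

theorem thin_zero_left {k : ℕ} (hk : k ≠ 0) : thin 0 q k = 0 := by
  simp [thin, zero_pow hk]

theorem thin_one_left (k : ℕ) : thin 1 q k = q k := by
  rw [thin, tsum_eq_single k]
  · simp
  · intro m hmk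
    rcases lt_or_gt_of_ne hmk with h | h
    · simp [Nat.choose_eq_zero_of_lt h]
    · simp [zero_pow (Nat.sub_ne_zero_of_lt h)]

end Thinning

theorem memM_one {p : ℕ → ℝ} (hp : IsPMF p) : MemM 1 p :=
  ⟨p, hp, fun k => (thin_one_left k).symm⟩

theorem not_memM_of_hole {p : ℕ → ℝ} {k : ℕ} (hpos : 0 < p (k + 1)) (hhole : p k = 0)
    {α : ℝ} (hα : α ∈ Set.Ioo (0 : ℝ) 1) : ¬ MemM α p := by
  rintro ⟨q, hq, hpq⟩
  rw [hpq] at hpos hhole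
  exact (thin_pos_of_thin_succ_pos hα.1 hα.2 hq hpos).ne' hhole

theorem not_memM_zero_of_pos {p : ℕ → ℝ} {n : ℕ} (hn : n ≠ 0) (hpos : 0 < p n) :
    ¬ MemM 0 p := by
  rintro ⟨q, -, hpq⟩
  rw [hpq, thin_zero_left hn] at hpos
  exact hpos.false

/-- if the support of `X` contains a hole then `X ∉ M_α` for all
`α ∈ (0,1)`, i.e. `ρ(X) = 1`. -/
theorem stmt_13 (p : ℕ → ℝ) (hp : IsPMF p) (n : ℕ) (hn : 1 ≤ n)
    (hpos : 0 < p n) (hhole : p (n - 1) = 0) :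
    (∀ α ∈ Set.Ioo (0:ℝ) 1, ¬ MemM α p) ∧ rho p = 1 := by
  obtain ⟨k, rfl⟩ : ∃ k, n = k + 1 := ⟨n - 1, by omega⟩
  have hinterior : ∀ α ∈ Set.Ioo (0:ℝ) 1, ¬ MemM α p := fun α hα =>
    not_memM_of_hole hpos hhole hα
  refine ⟨hinterior, ?_⟩
  have hadmissible : {α : ℝ | α ∈ Set.Icc (0:ℝ) 1 ∧ MemM α p} = {1} := by
    ext α
    refine ⟨fun ⟨hα, hmem⟩ => ?_, fun h => ?_⟩
    · rcases eq_or_lt_of_le hα.1 with rfl | h0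
      · exact absurd hmem (not_memM_zero_of_pos k.succ_ne_zero hpos)
      rcases eq_or_lt_of_le hα.2 with h1 | h1
      · exact h1
      · exact absurd hmem (hinterior α ⟨h0, h1⟩)
    · rw [Set.mem_singleton_iff.mp h]
      exact ⟨⟨zero_le_one, le_rfl⟩, memM_one hp⟩
  rw [rho, hadmissible, csInf_singleton]
end

section
/- Let X be a nonnegative integer-valued random variable with P(X=0) < 1 and E[X] < ∞. Then the conditional distribution of α∘X given α∘X ≥ 1 converges in distribution to the constant 1 as α → 0. -/
/-!
Both `P(α∘X = k)` (for `k ≥ 1`) and `P(α∘X ≥ 1) = 1 - E[(1-α)^X]` vanish to first order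
in `α`. After dividing by `α`, the summands are bounded by `n`, so dominated convergence (with the
dominating series `∑ n p n = E X < ∞`) gives the limits `[k = 1] E X` and `E X` respectively;
since `E X > 0`, their ratio tends to `[k = 1]`.
-/

open scoped BigOperators

open Filter Topology Set

lemma choose_mul_pow_mul_pow_le_one {x : ℝ} (hx0 : 0 ≤ x) (hx1 : x ≤ 1) (n k : ℕ) :
    (n.choose k : ℝ) * x ^ k * (1 - x) ^ (n - k) ≤ 1 := by
  rcases lt_or_ge n k with hnk | hkn
  · simp [Nat.choose_eq_zero_of_lt hnk]
  let y : unitInterval := ⟨x, hx0, hx1⟩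
  calc (n.choose k : ℝ) * x ^ k * (1 - x) ^ (n - k)
      = bernstein n (⟨k, Nat.lt_succ_of_le hkn⟩ : Fin (n + 1)) y := (bernstein_apply n k y).symm
    _ ≤ ∑ j : Fin (n + 1), bernstein n j y :=
        Finset.single_le_sum (fun _ _ => bernstein_nonneg) (Finset.mem_univ _)
    _ = 1 := bernstein.probability n y

lemma choose_mul_pow_pred_mul_pow_le {x : ℝ} (hx0 : 0 ≤ x) (hx1 : x ≤ 1) (n : ℕ) {k : ℕ}
    (hk : k ≠ 0) : (n.choose k : ℝ) * x ^ (k - 1) * (1 - x) ^ (n - k) ≤ n := by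
  obtain ⟨j, rfl⟩ := Nat.exists_eq_succ_of_ne_zero hk
  rcases n with _ | m
  · simp
  have hchoose : ((m + 1).choose (j + 1) : ℝ) ≤ (m + 1) * m.choose j := by
    have : (m + 1).choose (j + 1) ≤ (m + 1) * m.choose j := by
      rw [Nat.add_one_mul_choose_eq]
      exact Nat.le_mul_of_pos_right _ j.succ_pos
    exact_mod_cast this
  have hbin := choose_mul_pow_mul_pow_le_one hx0 hx1 m j
  have h1x : 0 ≤ 1 - x := by linarith
  calc ((m + 1).choose (j + 1) : ℝ) * x ^ (j + 1 - 1) * (1 - x) ^ (m + 1 - (j + 1))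
      = ((m + 1).choose (j + 1) : ℝ) * (x ^ j * (1 - x) ^ (m - j)) := by
        simp only [Nat.add_sub_cancel, Nat.add_sub_add_right, mul_assoc]
    _ ≤ (m + 1) * m.choose j * (x ^ j * (1 - x) ^ (m - j)) := by gcongr
    _ = (m + 1) * (m.choose j * x ^ j * (1 - x) ^ (m - j)) := by ring
    _ ≤ (m + 1) * 1 := by gcongr
    _ = ((m + 1 : ℕ) : ℝ) := by push_cast; ring

lemma geom_sum_range_le_of_le_one {x : ℝ} (hx0 : 0 ≤ x) (hx1 : x ≤ 1) (n : ℕ) :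
    ∑ i ∈ Finset.range n, x ^ i ≤ n := by
  simpa using Finset.sum_le_card_nsmul (Finset.range n) (x ^ ·) 1 fun i _ => pow_le_one₀ hx0 hx1

lemma tendsto_tsum_mul_of_continuous {l : Filter ℝ} {x₀ : ℝ} (hl : l ≤ 𝓝 x₀)
    {f : ℕ → ℝ → ℝ} {p b : ℕ → ℝ} (hf : ∀ n, Continuous (f n))
    (hp : ∀ n, 0 ≤ p n) (hb : Summable fun n => b n * p n)
    (hfb : ∀ᶠ x in l, ∀ n, |f n x| ≤ b n) :
    Tendsto (fun x => ∑' n, f n x * p n) l (𝓝 (∑' n, f n x₀ * p n)) := by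
  refine tendsto_tsum_of_dominated_convergence hb
    (fun n => (((hf n).tendsto x₀).mono_left hl).mul_const (p n)) ?_
  filter_upwards [hfb] with x hx n
  rw [norm_mul, Real.norm_eq_abs, Real.norm_of_nonneg (hp n)]
  exact mul_le_mul_of_nonneg_right (hx n) (hp n)

lemma thin_zero (α : ℝ) (p : ℕ → ℝ) : thin α p 0 = ∑' n, (1 - α) ^ n * p n := by
  simp [thin]

lemma thin_div_self (p : ℕ → ℝ) {α : ℝ} (hα : α ≠ 0) {k : ℕ} (hk : k ≠ 0) :
    thin α p k / α = ∑' n, (n.choose k * α ^ (k - 1) * (1 - α) ^ (n - k)) * p n := by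
  obtain ⟨j, rfl⟩ := Nat.exists_eq_succ_of_ne_zero hk
  rw [thin, ← tsum_div_const]
  congr 1 with n
  rw [Nat.succ_sub_one, pow_succ]
  field_simp

lemma IsPMF.one_sub_thin_zero_div_self {p : ℕ → ℝ} (hp : IsPMF p) {α : ℝ} (hα0 : 0 < α)
    (hα1 : α ≤ 1) :
    (1 - thin α p 0) / α = ∑' n, (∑ i ∈ Finset.range n, (1 - α) ^ i) * p n := by
  have hsummable : Summable fun n => (1 - α) ^ n * p n :=
    Summable.of_nonneg_of_le (fun n => mul_nonneg (pow_nonneg (by linarith) n) (hp.1 n))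
      (fun n => mul_le_of_le_one_left (hp.1 n) (pow_le_one₀ (by linarith) (by linarith)))
      hp.2.summable
  have hsub : HasSum (fun n => p n - (1 - α) ^ n * p n) (1 - thin α p 0) :=
    thin_zero α p ▸ hp.2.sub hsummable.hasSum
  rw [← hsub.tsum_eq, ← tsum_div_const]
  congr 1 with n
  have hgeom := geom_sum_mul_neg (1 - α) n
  rw [sub_sub_cancel] at hgeom
  rw [div_eq_iff hα0.ne']
  linear_combination -(p n) * hgeom

lemma tendsto_thin_div_self {p : ℕ → ℝ} (hp : ∀ n, 0 ≤ p n)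
    (hm : Summable fun n : ℕ => (n : ℝ) * p n) {k : ℕ} (hk : k ≠ 0) :
    Tendsto (fun α => thin α p k / α) (𝓝[Ioo 0 1] 0)
      (𝓝 (if k = 1 then ∑' n : ℕ, (n : ℝ) * p n else 0)) := by
  have hlim := tendsto_tsum_mul_of_continuous (l := 𝓝[Ioo 0 1] 0) nhdsWithin_le_nhds
    (f := fun n α => n.choose k * α ^ (k - 1) * (1 - α) ^ (n - k)) (by fun_prop) hp hm
    (eventually_nhdsWithin_of_forall fun α hα n => by
      rw [abs_of_nonneg (by have := hα.1.le; have := hα.2.le; positivity)]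
      exact choose_mul_pow_pred_mul_pow_le hα.1.le hα.2.le n hk)
  have hval : ∑' n : ℕ, (n.choose k * (0 : ℝ) ^ (k - 1) * (1 - 0) ^ (n - k)) * p n =
      if k = 1 then ∑' n : ℕ, (n : ℝ) * p n else 0 := by
    split_ifs with hk1
    · simp [hk1]
    · simp [zero_pow (show k - 1 ≠ 0 by omega)]
  rw [← hval]
  refine hlim.congr' (eventually_nhdsWithin_of_forall fun α hα => ?_)
  exact (thin_div_self p hα.1.ne' hk).symm

lemma IsPMF.tendsto_one_sub_thin_zero_div_self {p : ℕ → ℝ} (hp : IsPMF p)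
    (hm : Summable fun n : ℕ => (n : ℝ) * p n) :
    Tendsto (fun α => (1 - thin α p 0) / α) (𝓝[Ioo 0 1] 0)
      (𝓝 (∑' n : ℕ, (n : ℝ) * p n)) := by
  have hlim := tendsto_tsum_mul_of_continuous (l := 𝓝[Ioo 0 1] 0) nhdsWithin_le_nhds
    (f := fun n α => ∑ i ∈ Finset.range n, (1 - α) ^ i) (by fun_prop) hp.1 hm
    (eventually_nhdsWithin_of_forall fun α hα n => by
      have h1 : 0 ≤ 1 - α := by linarith [hα.2]
      rw [abs_of_nonneg (Finset.sum_nonneg fun i _ => pow_nonneg h1 i)]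
      exact geom_sum_range_le_of_le_one h1 (by linarith [hα.1]) n)
  simp only [sub_zero, one_pow, Finset.sum_const, Finset.card_range, nsmul_eq_mul,
    mul_one] at hlim
  refine hlim.congr' (eventually_nhdsWithin_of_forall fun α hα => ?_)
  exact (hp.one_sub_thin_zero_div_self hα.1 hα.2.le).symm

lemma IsPMF.tsum_natCast_mul_pos {p : ℕ → ℝ} (hp : IsPMF p) (h0 : p 0 < 1)
    (hm : Summable fun n : ℕ => (n : ℝ) * p n) :
    0 < ∑' n : ℕ, (n : ℝ) * p n := by
  obtain ⟨n, hn, hpn⟩ : ∃ n ≠ 0, 0 < p n := by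
    by_contra! h
    have : ∑' n, p n = p 0 := tsum_eq_single 0 fun n hn => le_antisymm (h n hn) (hp.1 n)
    linarith [hp.2.tsum_eq]
  exact hm.tsum_pos (fun i => mul_nonneg i.cast_nonneg (hp.1 i)) n
    (mul_pos (Nat.cast_pos.2 (Nat.pos_of_ne_zero hn)) hpn)

/-- if `P(X=0) < 1` and `E X < ∞` then the law of `α∘X` conditioned
on `{α∘X ≥ 1}` converges to the constant `1` as `α → 0`. -/
theorem stmt_14 (p : ℕ → ℝ) (hp : IsPMF p) (h0 : p 0 < 1)
    (hm : Summable fun k : ℕ => (k : ℝ) * p k) :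
    ∀ k : ℕ, Filter.Tendsto
      (fun α : ℝ => if k = 0 then 0 else thin α p k / (1 - thin α p 0))
      (nhdsWithin 0 (Set.Ioo (0:ℝ) 1))
      (nhds (if k = 1 then (1:ℝ) else 0)) := by
  intro k
  rcases eq_or_ne k 0 with rfl | hk
  · exact tendsto_const_nhds
  have hmean := hp.tsum_natCast_mul_pos h0 hm
  have hlim := (tendsto_thin_div_self hp.1 hm hk).div
    (hp.tendsto_one_sub_thin_zero_div_self hm) hmean.ne'
  have hval : (if k = 1 then ∑' n : ℕ, (n : ℝ) * p n else 0) / ∑' n : ℕ, (n : ℝ) * p n =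
      if k = 1 then 1 else 0 := by
    split_ifs <;> simp [hmean.ne']
  simp only [if_neg hk, ← hval]
  refine hlim.congr' (eventually_nhdsWithin_of_forall fun α hα => ?_)
  exact div_div_div_cancel_right₀ hα.1.ne' _ _
end

section
/- Let W be a nonnegative random variable and n ≥ 1. The function s ↦ E[(1 − sW)^n] is the alternate probability generating function of some random variable supported on {0,...,n} (i.e., equals Σ_{k=0}^n (1−s)^k q_k for a probability vector q) if and only if E[W^n] < ∞ and E[W^k (1−W)^{n−k}] ≥ 0 for every k ∈ {0,...,n} with n−k odd; in that case q_k = C(n,k)·E[W^k(1−W)^{n−k}]. Moreover, if these conditions hold for n, they also hold for n−1. -/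
/-!
Writing `1 - s w = (1 - s) w + (1 - w)` and expanding binomially gives
`E[(1 - s W)^n] = ∑ₖ (1 - s)^k C(n,k) E[W^k (1 - W)^(n-k)]` as soon as `E[W^n] < ∞`, so the
candidate weights are forced by uniqueness of polynomial coefficients. They sum to `1` (take
`s = 0`), and they are automatically nonnegative when `n - k` is even because `W ≥ 0`. If
`E[W^n] = ∞` then `E[(1 - s W)^n]` is the junk value `0` for every `s ≠ 0`, which no probability
vector can match. The passage from `n` to `n - 1` rests on
`w^k (1-w)^j = w^(k+1) (1-w)^j + w^k (1-w)^(j+1)`.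
-/

open MeasureTheory Finset

theorem abs_pow_mul_abs_one_sub_pow_le {a : ℝ} {k m n : ℕ} (hkm : k + m ≤ n) :
    |a| ^ k * |1 - a| ^ m ≤ 2 ^ (n - 1) * (1 + |a| ^ n) :=
  calc |a| ^ k * |1 - a| ^ m ≤ (1 + |a|) ^ k * (1 + |a|) ^ m := by
        gcongr
        · linarith
        · simpa using abs_sub 1 a
    _ ≤ (1 + |a|) ^ n := by
        rw [← pow_add]
        exact pow_le_pow_right₀ (by linarith [abs_nonneg a]) hkm
    _ ≤ 2 ^ (n - 1) * (1 + |a| ^ n) := by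
        simpa using add_pow_le zero_le_one (abs_nonneg a) n

theorem MeasureTheory.Integrable.pow_mul_one_sub_pow {α : Type*} [MeasurableSpace α]
    {μ : Measure α} [IsFiniteMeasure μ] {f : α → ℝ} (hf : AEStronglyMeasurable f μ) {n : ℕ}
    (h : Integrable (fun x => f x ^ n) μ) {k m : ℕ} (hkm : k + m ≤ n) :
    Integrable (fun x => f x ^ k * (1 - f x) ^ m) μ := by
  refine (((integrable_const 1).add h.abs).const_mul (2 ^ (n - 1))).mono'
    ((hf.pow k).mul ((aestronglyMeasurable_const.sub hf).pow m)) (ae_of_all _ fun x => ?_)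
  simpa [abs_mul, abs_pow] using abs_pow_mul_abs_one_sub_pow_le (a := f x) hkm

theorem integrable_pow_of_integrable_one_sub_mul_pow {μ : Measure ℝ} [IsFiniteMeasure μ]
    {n : ℕ} {s : ℝ} (hs : s ≠ 0) (h : Integrable (fun w => (1 - s * w) ^ n) μ) :
    Integrable (fun w => w ^ n) μ := by
  have hsw := h.pow_mul_one_sub_pow (by fun_prop) (le_of_eq (zero_add n))
  convert hsw.const_mul (s ^ n)⁻¹ using 2 with w
  simp [mul_pow, hs]

theorem one_sub_mul_pow_eq_sum (n : ℕ) (s w : ℝ) :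
    (1 - s * w) ^ n =
      ∑ k ∈ range (n + 1), (1 - s) ^ k * ((n.choose k : ℝ) * (w ^ k * (1 - w) ^ (n - k))) := by
  rw [show 1 - s * w = (1 - s) * w + (1 - w) by ring, add_pow]
  exact sum_congr rfl fun k _ => by rw [mul_pow]; ring

theorem integral_one_sub_mul_pow {μ : Measure ℝ} [IsFiniteMeasure μ] {n : ℕ}
    (h : Integrable (fun w => w ^ n) μ) (s : ℝ) :
    ∫ w, (1 - s * w) ^ n ∂μ =
      ∑ k ∈ range (n + 1),
        (1 - s) ^ k * ((n.choose k : ℝ) * ∫ w, w ^ k * (1 - w) ^ (n - k) ∂μ) := by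
  simp_rw [one_sub_mul_pow_eq_sum n s, ← integral_const_mul]
  refine integral_finsetSum _ fun k hk => ?_
  have hkn : k + (n - k) ≤ n := by grind
  exact ((h.pow_mul_one_sub_pow aestronglyMeasurable_id hkn).const_mul _).const_mul _

theorem eq_of_forall_sum_pow_mul_eq {R : Type*} [CommRing R] [IsDomain R] {S : Set R}
    (hS : S.Infinite) {m : ℕ} {c d : ℕ → R}
    (h : ∀ t ∈ S, ∑ k ∈ range m, t ^ k * c k = ∑ k ∈ range m, t ^ k * d k) :
    ∀ k < m, c k = d k := by
  set p : Polynomial R := ∑ k ∈ range m, Polynomial.monomial k (c k - d k)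
  have hp : p = 0 := by
    refine Polynomial.eq_zero_of_infinite_isRoot p (hS.mono fun t ht => ?_)
    simp only [Set.mem_ofPred_eq, Polynomial.IsRoot.def, p, Polynomial.eval_finsetSum,
      Polynomial.eval_monomial, sub_mul, sum_sub_distrib, sub_eq_zero]
    simpa only [mul_comm] using h t ht
  intro k hk
  have := congrArg (Polynomial.coeff · k) hp
  simpa [p, Polynomial.finsetSum_coeff, Polynomial.coeff_monomial, hk, sub_eq_zero] using this

def BinomialMixtureCondition (μ : Measure ℝ) (n : ℕ) : Prop :=
  Integrable (fun w => w ^ n) μ ∧ ∀ k ≤ n, Odd (n - k) → 0 ≤ ∫ w, w ^ k * (1 - w) ^ (n - k) ∂μ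

theorem integral_pow_mul_one_sub_pow_nonneg_of_even {μ : Measure ℝ} (hnn : ∀ᵐ w ∂μ, 0 ≤ w)
    (k : ℕ) {m : ℕ} (hm : Even m) : 0 ≤ ∫ w, w ^ k * (1 - w) ^ m ∂μ :=
  integral_nonneg_of_ae <| hnn.mono fun _ hw => mul_nonneg (pow_nonneg hw k) (hm.pow_nonneg _)

theorem BinomialMixtureCondition.integral_nonneg {μ : Measure ℝ} {n : ℕ}
    (h : BinomialMixtureCondition μ n) (hnn : ∀ᵐ w ∂μ, 0 ≤ w) {k : ℕ} (hk : k ≤ n) :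
    0 ≤ ∫ w, w ^ k * (1 - w) ^ (n - k) ∂μ :=
  (Nat.even_or_odd (n - k)).elim (integral_pow_mul_one_sub_pow_nonneg_of_even hnn k) (h.2 k hk)

theorem BinomialMixtureCondition.pred {μ : Measure ℝ} [IsFiniteMeasure μ] {n : ℕ}
    (h : BinomialMixtureCondition μ n) (hnn : ∀ᵐ w ∂μ, 0 ≤ w) :
    BinomialMixtureCondition μ (n - 1) := by
  have hint {k m : ℕ} (hkm : k + m ≤ n) : Integrable (fun w => w ^ k * (1 - w) ^ m) μ :=
    h.1.pow_mul_one_sub_pow aestronglyMeasurable_id hkm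
  refine ⟨by simpa using hint (k := n - 1) (m := 0) (by omega), fun k hk hodd => ?_⟩
  have hkn : k + 1 ≤ n := by have := hodd.pos; omega
  have hsucc : n - (k + 1) = n - 1 - k := by omega
  have hsplit : ∫ w, w ^ k * (1 - w) ^ (n - 1 - k) ∂μ =
      (∫ w, w ^ (k + 1) * (1 - w) ^ (n - 1 - k) ∂μ) +
        ∫ w, w ^ k * (1 - w) ^ (n - 1 - k + 1) ∂μ := by
    rw [← integral_add (hint (k := k + 1) (by omega)) (hint (m := n - 1 - k + 1) (by omega))]
    exact integral_congr_ae (ae_of_all _ fun w => by ring)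
  rw [hsplit]
  exact add_nonneg (hsucc ▸ h.2 (k + 1) hkn (hsucc ▸ hodd))
    (integral_pow_mul_one_sub_pow_nonneg_of_even hnn k hodd.add_one)

theorem binomialMixtureCondition_of_integral_one_sub_mul_pow_eq {μ : Measure ℝ}
    [IsProbabilityMeasure μ] {n : ℕ} {q : ℕ → ℝ} (hq : ∀ k, 0 ≤ q k)
    (h : ∀ s : ℝ, ∫ w, (1 - s * w) ^ n ∂μ = ∑ k ∈ range (n + 1), (1 - s) ^ k * q k) :
    BinomialMixtureCondition μ n := by
  have h' (t : ℝ) : ∫ w, (1 - (1 - t) * w) ^ n ∂μ = ∑ k ∈ range (n + 1), t ^ k * q k := by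
    rw [h, sub_sub_cancel]
  have hint : Integrable (fun w => w ^ n) μ := by
    by_contra hni
    have hq0 : ∀ k < n + 1, q k = 0 := by
      refine eq_of_forall_sum_pow_mul_eq (Set.finite_singleton 1).infinite_compl fun t ht => ?_
      rw [← h', integral_undef fun hI => hni <| integrable_pow_of_integrable_one_sub_mul_pow
        (sub_ne_zero.2 (Ne.symm ht)) hI]
      simp
    have h0 := h 0
    simp only [zero_mul, sub_zero, one_pow, integral_const, one_mul, probReal_univ,
      smul_eq_mul, mul_one] at h0
    rw [sum_congr rfl fun k hk => hq0 k (mem_range.1 hk), sum_const_zero] at h0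
    exact one_ne_zero h0
  have hcoeff := eq_of_forall_sum_pow_mul_eq (c := q)
    (d := fun k => n.choose k * ∫ w, w ^ k * (1 - w) ^ (n - k) ∂μ) Set.infinite_univ fun t _ => by
    rw [← h', integral_one_sub_mul_pow hint, sub_sub_cancel]
  refine ⟨hint, fun k hk _ => nonneg_of_mul_nonneg_right ?_ (Nat.cast_pos.2 (n.choose_pos hk))⟩
  rw [← hcoeff k (Nat.lt_succ_of_le hk)]
  exact hq k

theorem BinomialMixtureCondition.exists_pmf {μ : Measure ℝ} [IsProbabilityMeasure μ] {n : ℕ}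
    (h : BinomialMixtureCondition μ n) (hnn : ∀ᵐ w ∂μ, 0 ≤ w) :
    ∃ q : ℕ → ℝ, IsPMF q ∧ (∀ k, n < k → q k = 0) ∧
      ∀ s : ℝ, ∫ w, (1 - s * w) ^ n ∂μ = ∑ k ∈ range (n + 1), (1 - s) ^ k * q k := by
  set q : ℕ → ℝ := fun k => if k ≤ n then n.choose k * ∫ w, w ^ k * (1 - w) ^ (n - k) ∂μ else 0
  have hq : ∀ k ∈ range (n + 1), q k = n.choose k * ∫ w, w ^ k * (1 - w) ^ (n - k) ∂μ :=
    fun k hk => if_pos (Nat.le_of_lt_succ (mem_range.1 hk))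
  have hq_zero : ∀ k, n < k → q k = 0 := fun k hk => if_neg (not_le.2 hk)
  have hapgf (s : ℝ) : ∫ w, (1 - s * w) ^ n ∂μ = ∑ k ∈ range (n + 1), (1 - s) ^ k * q k := by
    rw [integral_one_sub_mul_pow h.1]
    exact sum_congr rfl fun k hk => by rw [hq k hk]
  have hsum : HasSum q 1 := by
    have hsum_one : ∑ k ∈ range (n + 1), q k = 1 := by simpa using (hapgf 0).symm
    exact hsum_one ▸ hasSum_sum_of_ne_finset_zero fun k hk => hq_zero k (by simpa using hk)
  refine ⟨q, ⟨fun k => ?_, hsum⟩, hq_zero, hapgf⟩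
  by_cases hk : k ≤ n
  · rw [hq k (mem_range.2 (Nat.lt_succ_of_le hk))]
    exact mul_nonneg (Nat.cast_nonneg _) (h.integral_nonneg hnn hk)
  · exact (hq_zero k (not_le.1 hk)).ge

theorem stmt_19_general (n : ℕ) (μ : MeasureTheory.Measure ℝ)
    (hμ : MeasureTheory.IsProbabilityMeasure μ) (hnn : μ (Set.Iio 0) = 0) :
    ((∃ q : ℕ → ℝ, IsPMF q ∧ (∀ k, n < k → q k = 0) ∧
        ∀ s : ℝ, (∫ w, (1 - s * w) ^ n ∂μ) =
          ∑ k ∈ Finset.range (n + 1), (1 - s) ^ k * q k) ↔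
      (MeasureTheory.Integrable (fun w => w ^ n) μ ∧
        ∀ k ≤ n, Odd (n - k) → 0 ≤ ∫ w, w ^ k * (1 - w) ^ (n - k) ∂μ)) ∧
    ((MeasureTheory.Integrable (fun w => w ^ n) μ ∧
        ∀ k ≤ n, Odd (n - k) → 0 ≤ ∫ w, w ^ k * (1 - w) ^ (n - k) ∂μ) →
      ∀ s : ℝ, (∫ w, (1 - s * w) ^ n ∂μ) =
        ∑ k ∈ Finset.range (n + 1),
          (1 - s) ^ k * ((n.choose k : ℝ) * ∫ w, w ^ k * (1 - w) ^ (n - k) ∂μ)) ∧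
    ((MeasureTheory.Integrable (fun w => w ^ n) μ ∧
        ∀ k ≤ n, Odd (n - k) → 0 ≤ ∫ w, w ^ k * (1 - w) ^ (n - k) ∂μ) →
      (MeasureTheory.Integrable (fun w => w ^ (n - 1)) μ ∧
        ∀ k ≤ n - 1, Odd (n - 1 - k) → 0 ≤ ∫ w, w ^ k * (1 - w) ^ (n - 1 - k) ∂μ)) := by
  have hae : ∀ᵐ w ∂μ, 0 ≤ w := by
    simp_rw [ae_iff, not_le]
    exact hnn
  refine ⟨⟨fun ⟨_, hq, _, hapgf⟩ => ?_, fun h => BinomialMixtureCondition.exists_pmf h hae⟩,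
    fun h => integral_one_sub_mul_pow h.1, fun h => BinomialMixtureCondition.pred h hae⟩
  exact binomialMixtureCondition_of_integral_one_sub_mul_pow_eq hq.1 hapgf

/-- for a nonnegative random variable `W` and `n ≥ 1`,
`s ↦ E[(1−sW)^n]` is the a.p.g.f. of a distribution on `{0,…,n}` iff
`E[W^n] < ∞` and `E[W^k(1−W)^{n−k}] ≥ 0` for all `k` with `n−k` odd; in that case
`q_k = C(n,k) E[W^k(1−W)^{n−k}]`, and the conditions for `n` imply those for `n−1`. -/
theorem stmt_19 (n : ℕ) (hn : 1 ≤ n) (μ : MeasureTheory.Measure ℝ)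
    (hμ : MeasureTheory.IsProbabilityMeasure μ) (hnn : μ (Set.Iio 0) = 0) :
    ((∃ q : ℕ → ℝ, IsPMF q ∧ (∀ k, n < k → q k = 0) ∧
        ∀ s : ℝ, (∫ w, (1 - s * w) ^ n ∂μ) =
          ∑ k ∈ Finset.range (n + 1), (1 - s) ^ k * q k) ↔
      (MeasureTheory.Integrable (fun w => w ^ n) μ ∧
        ∀ k ≤ n, Odd (n - k) → 0 ≤ ∫ w, w ^ k * (1 - w) ^ (n - k) ∂μ)) ∧
    ((MeasureTheory.Integrable (fun w => w ^ n) μ ∧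
        ∀ k ≤ n, Odd (n - k) → 0 ≤ ∫ w, w ^ k * (1 - w) ^ (n - k) ∂μ) →
      ∀ s : ℝ, (∫ w, (1 - s * w) ^ n ∂μ) =
        ∑ k ∈ Finset.range (n + 1),
          (1 - s) ^ k * ((n.choose k : ℝ) * ∫ w, w ^ k * (1 - w) ^ (n - k) ∂μ)) ∧
    ((MeasureTheory.Integrable (fun w => w ^ n) μ ∧
        ∀ k ≤ n, Odd (n - k) → 0 ≤ ∫ w, w ^ k * (1 - w) ^ (n - k) ∂μ) →
      (MeasureTheory.Integrable (fun w => w ^ (n - 1)) μ ∧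
        ∀ k ≤ n - 1, Odd (n - 1 - k) → 0 ≤ ∫ w, w ^ k * (1 - w) ^ (n - 1 - k) ∂μ)) :=
  stmt_19_general n μ hμ hnn
end
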